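/- arXiv:2601.05581 — 2 statements merged into one kernel-verified Lean document; each statement's English description precedes it below -/
import Mathlib

section
/- Let K_{q^m}(t, R') denote the minimal size of a code in F_{q^m}^t with Hamming covering radius at most R', and K_{q,m}(t, R) the minimal size of a sum-rank code in (F_q^{m×m})^t with sum-rank covering radius at most R. If m divides R, then K_{q,m}(t, R) ≤ (K_{q^m}(t, R/m))^m. -/
open Finset Module

open Classical in
/-- The rank of a matrix is at most the number of its nonzero rows. -/
lemma rank_le_card_nonzero_rows {F : Type*} [Field F] [DecidableEq F] {n : ℕ}
    (M : Matrix (Fin n) (Fin n) F) :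
    M.rank ≤ (Finset.univ.filter fun j => M j ≠ 0).card := by
  classical
  set s : Finset (Fin n → F) := (Finset.univ.filter fun j => M j ≠ 0).image M with hs
  have h1 : M.rank = finrank F (Submodule.span F (Set.range M)) :=
    Matrix.rank_eq_finrank_span_row M
  have h2 : Submodule.span F (Set.range M) ≤ Submodule.span F (s : Set (Fin n → F)) := by
    rw [Submodule.span_le]
    rintro _ ⟨j, rfl⟩
    by_cases hj : M j = 0
    · rw [hj]; exact Submodule.zero_mem _
    · refine Submodule.subset_span ?_
      simp only [hs, Finset.coe_image, Set.mem_image, Finset.mem_coe, Finset.mem_filter,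
        Finset.mem_univ, true_and]
      exact (Finset.mem_image.mpr ⟨j, Finset.mem_filter.mpr ⟨Finset.mem_univ _, hj⟩, rfl⟩ : M j ∈ s)
  calc M.rank = finrank F (Submodule.span F (Set.range M)) := h1
    _ ≤ finrank F (Submodule.span F (s : Set (Fin n → F))) := Submodule.finrank_mono h2
    _ ≤ s.card := by simpa [Set.finrank] using finrank_span_finset_le_card (R := F) s
    _ ≤ _ := Finset.card_image_le

/-- If `m ∣ R`, then the minimal size `K_{q,m}(t, R)` of a sum-rank code in
`(F_q^{m×m})^t` with sum-rank covering radius at most `R` satisfies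
`K_{q,m}(t, R) ≤ (K_{q^m}(t, R/m))^m`, where `K_{q^m}(t, R')` is the minimal size of a
code in `F_{q^m}^t` with Hamming covering radius at most `R'`. -/
theorem minimal_covering_size_le (q m t R : ℕ)
    (Fq K : Type) [Field Fq] [Fintype Fq] [Field K] [Fintype K] [DecidableEq K]
    [Algebra Fq K]
    (hq : ∃ p j : ℕ, p.Prime ∧ 0 < j ∧ q = p ^ j)
    (hcq : Fintype.card Fq = q) (hcK : Fintype.card K = q ^ m)
    (hR : m ∣ R) :
    sInf {s : ℕ | ∃ C : Set (Fin t → Matrix (Fin m) (Fin m) Fq),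
        (∀ x : Fin t → Matrix (Fin m) (Fin m) Fq, ∃ c ∈ C, ∑ i, (x i - c i).rank ≤ R) ∧
        Nat.card C = s} ≤
      (sInf {s : ℕ | ∃ C : Set (Fin t → K),
        (∀ x : Fin t → K, ∃ c ∈ C, hammingDist x c ≤ R / m) ∧
        Nat.card C = s}) ^ m := by
  classical
  -- q ≥ 2
  obtain ⟨p, j, hp, hj, rfl⟩ := hq
  have hq2 : 2 ≤ p ^ j := by
    calc 2 ≤ p := hp.two_le
    _ = p ^ 1 := (pow_one p).symm
    _ ≤ p ^ j := Nat.pow_le_pow_right hp.pos hj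
  -- finrank Fq K = m
  have hfr : finrank Fq K = m := by
    have := card_eq_pow_finrank (K := Fq) (V := K)
    rw [hcq, hcK] at this
    exact (Nat.pow_right_injective hq2 this.symm)
  -- a basis of K over Fq indexed by Fin m
  let b : Basis (Fin m) Fq K := (Module.finBasis Fq K).reindex (finCongr hfr)
  let e : K ≃ₗ[Fq] (Fin m → Fq) := b.equivFun
  -- the inner RHS set is nonempty: the whole space is a covering code
  have hne : {s : ℕ | ∃ C : Set (Fin t → K),
      (∀ x : Fin t → K, ∃ c ∈ C, hammingDist x c ≤ R / m) ∧ Nat.card C = s}.Nonempty := by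
    exact ⟨Nat.card (Set.univ : Set (Fin t → K)), Set.univ,
      fun x => ⟨x, Set.mem_univ x, by simp⟩, rfl⟩
  obtain ⟨C', hC'cov, hC'card⟩ := Nat.sInf_mem hne
  -- build the sum-rank code
  let C : Set (Fin t → Matrix (Fin m) (Fin m) Fq) :=
    {x | ∀ j : Fin m, (fun i => e.symm (x i j)) ∈ C'}
  apply Nat.sInf_le
  refine ⟨C, ?_, ?_⟩
  · -- covering radius
    intro x
    have h := fun j : Fin m => hC'cov (fun i => e.symm (x i j))
    choose cw hcwC hcwd using h
    have key : ∀ (i : Fin t) (jj : Fin m),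
        (x i - Matrix.of fun j' => e (cw j' i)) jj = e (e.symm (x i jj) - cw jj i) := by
      intro i jj
      funext k
      show x i jj k - e (cw jj i) k = e (e.symm (x i jj) - cw jj i) k
      rw [map_sub, Pi.sub_apply, LinearEquiv.apply_symm_apply]
    refine ⟨fun i => Matrix.of fun j => e (cw j i), fun jj => ?_, ?_⟩
    · have hrow : (fun i => e.symm ((Matrix.of fun j' => e (cw j' i)) jj)) = cw jj :=
        funext fun i => e.symm_apply_apply _
      exact hrow ▸ hcwC jj
    · calc ∑ i, ((x i - Matrix.of fun j => e (cw j i)).rank)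
          ≤ ∑ i, (Finset.univ.filter
              fun j : Fin m => (x i - Matrix.of fun j' => e (cw j' i)) j ≠ 0).card :=
            Finset.sum_le_sum fun i _ => rank_le_card_nonzero_rows _
        _ = ∑ i, ∑ j : Fin m,
              if (x i - Matrix.of fun j' => e (cw j' i)) j ≠ 0 then 1 else 0 := by
            simp [Finset.card_filter]
            exact Finset.sum_congr rfl fun i _ => Finset.sum_congr rfl fun j _ => by congr
        _ = ∑ j : Fin m, ∑ i,
              if (x i - Matrix.of fun j' => e (cw j' i)) j ≠ 0 then 1 else 0 :=
            Finset.sum_comm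
        _ = ∑ j : Fin m, hammingDist (fun i => e.symm (x i j)) (cw j) := by
            refine Finset.sum_congr rfl fun j _ => ?_
            rw [hammingDist, Finset.card_filter]
            refine Finset.sum_congr rfl fun i _ => ?_
            congr 1
            rw [key i j, eq_iff_iff, LinearEquiv.map_ne_zero_iff, sub_ne_zero]
        _ ≤ ∑ _j : Fin m, R / m := Finset.sum_le_sum fun j _ => hcwd j
        _ = m * (R / m) := by simp [Finset.sum_const, mul_comm]
        _ = R := Nat.mul_div_cancel' hR
  · -- cardinality
    have hequiv : C ≃ (Fin m → C') :=
      { toFun := fun x => fun j => ⟨fun i => e.symm (x.1 i j), x.2 j⟩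
        invFun := fun g => ⟨fun i => Matrix.of fun j => e ((g j).1 i),
          fun jj => by
            have hrow : (fun i => e.symm ((Matrix.of fun j' => e ((g j').1 i)) jj)) = (g jj).1 :=
              funext fun i => e.symm_apply_apply _
            exact hrow ▸ (g jj).2⟩
        left_inv := fun x => Subtype.ext <| funext fun i => funext fun j =>
          show e (e.symm (x.1 i j)) = x.1 i j from e.apply_symm_apply _
        right_inv := fun g => funext fun j => Subtype.ext <| funext fun i =>
          show e.symm (e ((g j).1 i)) = (g j).1 i from e.symm_apply_apply _ }
    rw [← hC'card, Nat.card_congr hequiv, Nat.card_fun]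
    simp
end

section
/- Let q be a prime power and t ≤ q². Let C₁ be a Reed–Solomon code [t, t−3, 4] over F_{q²} and C₂ the trivial code [t, t−1, 2] over F_{q²}. Then the sum-rank code SR(C₁, C₂) ⊆ (F_q^{2×2})^t has F_q-dimension 4t − 8, minimum sum-rank distance exactly 4, and its Singleton defect 2(2t − d + 1) − dim equals 2. -/
/-- The parity-check (trivial `[t, t−1, 2]`) code `{x : ∑ᵢ xᵢ = 0}` over a field `K`. -/
def parityCode (K : Type*) [Field K] (t : ℕ) : Submodule K (Fin t → K) where
  carrier := {x | ∑ i, x i = 0}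
  add_mem' := by
    intro a b ha hb
    simp only [Set.mem_setOf_eq] at *
    simp [Finset.sum_add_distrib, ha, hb]
  zero_mem' := by simp
  smul_mem' := by
    intro c x hx
    simp only [Set.mem_setOf_eq, Pi.smul_apply, smul_eq_mul] at *
    simp [← Finset.mul_sum, hx]

/-- The rank of the block `x ↦ a x + b x^q` of the sum-rank code `SR(C₁, C₂)` of matrix
size `2 × 2`: the `F_q`-dimension of (the span of) the range of this `F_q`-linear map on
`F_{q²}`. -/
noncomputable def blockRank2 (Fq : Type*) [Field Fq] {Fq2 : Type*} [Field Fq2]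
    [Algebra Fq Fq2] (q : ℕ) (a b : Fq2) : ℕ :=
  Module.finrank Fq (Submodule.span Fq (Set.range fun x : Fq2 => a * x + b * x ^ q))

/-!
Each block `x ↦ a x + b x^q` of `SR(C₁, C₂)` is a nonzero map, hence of rank `≥ 1`, as soon as
`a ≠ 0`: the polynomial `a X + b X^q` has degree `q < q²` and so cannot vanish on all of `F_{q²}`.
If `a = 0 ≠ b` the block is bijective, because `x ↦ x^q` is an involution of `F_{q²}`, so it has
rank `2`. Hence a nonzero codeword `(c₁, c₂)` has sum-rank weight at least `wt(c₁) ≥ 4` when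
`c₁ ≠ 0`, and exactly `2 wt(c₂) ≥ 4` when `c₁ = 0`; the latter is attained by `c₂ = e₀ - e₁`.
The dimension is `[F_{q²} : F_q] ((t - 3) + (t - 1)) = 4t - 8`.
-/

open Module Polynomial

theorem Module.finrank_eq_of_card_eq_pow {K V : Type*} [Field K] [Fintype K] [AddCommGroup V]
    [Module K V] [Fintype V] {q n : ℕ} (hK : Fintype.card K = q) (hV : Fintype.card V = q ^ n) :
    finrank K V = n := by
  have h := card_eq_pow_finrank (K := K) (V := V)
  rw [hV, hK] at h
  exact Nat.pow_right_injective (hK ▸ Fintype.one_lt_card) h.symm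

theorem pow_bijective_of_card_eq_sq {L : Type*} [Field L] [Fintype L] {q : ℕ}
    (hL : Fintype.card L = q ^ 2) : Function.Bijective fun x : L => x ^ q :=
  Function.Involutive.bijective fun x => by
    simp only [← pow_mul, ← sq, ← hL, FiniteField.pow_card]

theorem Submodule.finrank_prod {K M N : Type*} [DivisionRing K] [AddCommGroup M] [Module K M]
    [AddCommGroup N] [Module K N] (p : Submodule K M) (q : Submodule K N)
    [FiniteDimensional K p] [FiniteDimensional K q] :
    finrank K (p.prod q) = finrank K p + finrank K q := by
  rw [← Module.finrank_prod,
    ← LinearMap.finrank_range_of_inj (f := p.subtype.prodMap q.subtype)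
      (p.injective_subtype.prodMap q.injective_subtype),
    LinearMap.range_prodMap, Submodule.range_subtype, Submodule.range_subtype]

theorem Submodule.finrank_restrictScalars (K : Type*) {L V : Type*} [Field K] [Field L]
    [Algebra K L] [AddCommGroup V] [Module K V] [Module L V] [IsScalarTower K L V]
    [FiniteDimensional K L] (p : Submodule L V) [FiniteDimensional L p] :
    finrank K (p.restrictScalars K) = finrank K L * finrank L p := by
  rw [((Submodule.restrictScalarsEquiv K L V p).restrictScalars K).finrank_eq,
    Module.finrank_mul_finrank K L p]

section blockRank2

variable {Fq Fq2 : Type*} [Field Fq] [Field Fq2] [Algebra Fq Fq2] {q : ℕ}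

theorem blockRank2_eq_zero_iff [FiniteDimensional Fq Fq2] {a b : Fq2} :
    blockRank2 Fq q a b = 0 ↔ ∀ x, a * x + b * x ^ q = 0 := by
  simp [blockRank2, Submodule.span_eq_bot]

theorem blockRank2_zero_zero [FiniteDimensional Fq Fq2] : blockRank2 Fq q (0 : Fq2) 0 = 0 :=
  blockRank2_eq_zero_iff.2 fun x => by simp

theorem blockRank2_zero_left {b : Fq2} (hb : b ≠ 0)
    (hq : Function.Surjective fun x : Fq2 => x ^ q) : blockRank2 Fq q 0 b = finrank Fq Fq2 := by
  have hrange : Set.range (fun x : Fq2 => 0 * x + b * x ^ q) = Set.univ := by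
    refine Set.eq_univ_of_forall fun y => ?_
    obtain ⟨x, hx⟩ := hq (b⁻¹ * y)
    exact ⟨x, by simp only at hx; simp [hx, hb]⟩
  rw [blockRank2, hrange, Submodule.span_univ, finrank_top]

theorem blockRank2_pos [Fintype Fq2] {a b : Fq2} (ha : a ≠ 0) (hq1 : 1 < q)
    (hq : q < Fintype.card Fq2) : 0 < blockRank2 Fq q a b := by
  rw [Nat.pos_iff_ne_zero, Ne, blockRank2_eq_zero_iff, not_forall]
  let f : Fq2[X] := C a * X + C b * X ^ q
  have hf : f ≠ 0 := fun h => ha <| by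
    simpa [f, coeff_X_pow, hq1.ne] using congrArg (coeff · 1) h
  have hdeg : f.natDegree ≤ q := by
    unfold f
    compute_degree
    exact max_le hq1.le le_rfl
  obtain ⟨x, hx⟩ := exists_eval_ne_zero_of_natDegree_lt_card f hf
    (by simpa using hdeg.trans_lt hq)
  exact ⟨x, by simpa [f] using hx⟩

variable {ι : Type*} [Fintype ι] [DecidableEq Fq2]

theorem sum_blockRank2_zero_left [FiniteDimensional Fq Fq2]
    (hq : Function.Surjective fun x : Fq2 => x ^ q) (c : ι → Fq2) :
    ∑ i, blockRank2 Fq q 0 (c i) = finrank Fq Fq2 * hammingNorm c := by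
  rw [hammingNorm, Finset.card_eq_sum_ones, Finset.mul_sum, Finset.sum_filter]
  refine Finset.sum_congr rfl fun i _ => ?_
  split_ifs with h
  · rw [blockRank2_zero_left h hq, mul_one]
  · rw [not_not.1 h, blockRank2_zero_zero]

theorem hammingNorm_le_sum_blockRank2 [Fintype Fq2] (hq1 : 1 < q) (hq : q < Fintype.card Fq2)
    (a b : ι → Fq2) : hammingNorm a ≤ ∑ i, blockRank2 Fq q (a i) (b i) := by
  rw [hammingNorm, Finset.card_eq_sum_ones]
  calc ∑ i ∈ {i | a i ≠ 0}, 1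
      ≤ ∑ i ∈ {i | a i ≠ 0}, blockRank2 Fq q (a i) (b i) :=
        Finset.sum_le_sum fun i hi => blockRank2_pos (Finset.mem_filter.1 hi).2 hq1 hq
    _ ≤ ∑ i, blockRank2 Fq q (a i) (b i) := Finset.sum_le_sum_of_subset (Finset.subset_univ _)

end blockRank2

section parityCode

variable (K : Type*) [Field K]

theorem finrank_parityCode (t : ℕ) : finrank K (parityCode K t) = t - 1 := by
  obtain _ | t := t
  · exact finrank_zero_of_subsingleton
  let f : Module.Dual K (Fin (t + 1) → K) := ∑ i, LinearMap.proj i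
  have hf : ∀ x, f x = ∑ i, x i := fun x => by simp [f]
  have hker : parityCode K (t + 1) = LinearMap.ker f := by
    ext x
    rw [LinearMap.mem_ker, hf]
    rfl
  have hf0 : f ≠ 0 := fun h => by simpa [hf] using LinearMap.congr_fun h (Pi.single 0 1)
  have := Module.Dual.finrank_ker_add_one_of_ne_zero hf0
  rw [finrank_fin_fun] at this
  rw [hker]
  omega

variable {K} [DecidableEq K] {t : ℕ}

theorem two_le_hammingNorm_of_mem_parityCode {c : Fin t → K} (hc : c ∈ parityCode K t)
    (h0 : c ≠ 0) : 2 ≤ hammingNorm c := by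
  by_contra! h
  obtain ⟨j, hj⟩ :=
    Finset.card_eq_one.1 (le_antisymm (Nat.lt_succ_iff.1 h) (hammingNorm_pos_iff.2 h0))
  have hsupp : ∀ i, c i ≠ 0 ↔ i = j := by simpa [Finset.ext_iff] using hj
  have hsum : ∑ i, c i = c j :=
    Finset.sum_eq_single j (fun i _ hi => not_not.1 fun h => hi ((hsupp i).1 h)) (by simp)
  exact (hsupp j).2 rfl (hsum ▸ hc)

theorem exists_mem_parityCode_hammingNorm_eq_two (ht : 2 ≤ t) :
    ∃ c ∈ parityCode K t, hammingNorm c = 2 := by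
  let i : Fin t := ⟨0, by omega⟩
  let j : Fin t := ⟨1, by omega⟩
  have hij : i ≠ j := by simp [i, j, Fin.ext_iff]
  refine ⟨Pi.single i 1 - Pi.single j 1, ?_, ?_⟩
  · show ∑ _, _ = 0
    simp [Finset.sum_sub_distrib]
  · have hsupp : ({k | (Pi.single i 1 - Pi.single j 1 : Fin t → K) k ≠ 0} : Finset (Fin t))
        = {i, j} := by
      ext k
      by_cases hki : k = i <;> by_cases hkj : k = j <;> simp_all [Pi.single_apply]
    rw [hammingNorm, hsupp, Finset.card_pair hij]

end parityCode

theorem almost_msrd_22_general (q t : ℕ)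
    (Fq Fq2 : Type) [Field Fq] [Fintype Fq] [Field Fq2] [Fintype Fq2]
    [DecidableEq Fq2] [Algebra Fq Fq2]
    (hcq : Fintype.card Fq = q) (hcq2 : Fintype.card Fq2 = q ^ 2)
    (ht4 : 4 ≤ t)
    (C₁ : Submodule Fq2 (Fin t → Fq2))
    (hk₁ : Module.finrank Fq2 C₁ = t - 3)
    (hd₁ : ∀ c ∈ C₁, c ≠ 0 → 4 ≤ hammingNorm c) :
    Module.finrank Fq (Submodule.restrictScalars Fq (C₁.prod (parityCode Fq2 t)))
        = 4 * t - 8 ∧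
    (∀ p ∈ C₁.prod (parityCode Fq2 t), p ≠ 0 →
      4 ≤ ∑ i : Fin t, blockRank2 Fq q (p.1 i) (p.2 i)) ∧
    (∃ p ∈ C₁.prod (parityCode Fq2 t), p ≠ 0 ∧
      ∑ i : Fin t, blockRank2 Fq q (p.1 i) (p.2 i) = 4) ∧
    2 * (2 * t - 4 + 1) - (4 * t - 8) = 2 := by
  have hq1 : 1 < q := hcq ▸ Fintype.one_lt_card
  have hq : q < Fintype.card Fq2 := hcq2 ▸ lt_self_pow₀ hq1 one_lt_two
  have hfr : finrank Fq Fq2 = 2 := finrank_eq_of_card_eq_pow hcq hcq2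
  have hsurj := (pow_bijective_of_card_eq_sq hcq2).surjective
  refine ⟨?_, ?_, ?_, by omega⟩
  · rw [Submodule.finrank_restrictScalars, Submodule.finrank_prod, hk₁, finrank_parityCode, hfr]
    omega
  · rintro ⟨c₁, c₂⟩ hc hne
    obtain ⟨hc₁, hc₂⟩ : c₁ ∈ C₁ ∧ c₂ ∈ parityCode Fq2 t := hc
    rcases eq_or_ne c₁ 0 with rfl | h₁
    · have h₂ : c₂ ≠ 0 := fun h => hne (by rw [h]; rfl)
      have := two_le_hammingNorm_of_mem_parityCode hc₂ h₂
      simp only [Pi.zero_apply, sum_blockRank2_zero_left hsurj, hfr]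
      omega
    · exact (hd₁ c₁ hc₁ h₁).trans (hammingNorm_le_sum_blockRank2 hq1 hq c₁ c₂)
  · obtain ⟨c, hc, hwt⟩ :=
      exists_mem_parityCode_hammingNorm_eq_two (K := Fq2) (by omega : 2 ≤ t)
    refine ⟨(0, c), Submodule.mem_prod.2 ⟨zero_mem _, hc⟩, ?_, ?_⟩
    · exact fun h => by simp [(Prod.mk_eq_zero.1 h).2] at hwt
    · simp only [Pi.zero_apply, sum_blockRank2_zero_left hsurj, hfr, hwt]

/-- For `t ≤ q²`, with `C₁` a `[t, t−3, 4]` Reed–Solomon code over `F_{q²}` and `C₂` the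
trivial `[t, t−1, 2]` code, the sum-rank code `SR(C₁, C₂) ⊆ (F_q^{2×2})^t` has
`F_q`-dimension `4t − 8`, minimum sum-rank distance exactly `4`, and Singleton defect
`2(2t − d + 1) − dim = 2` (an almost MSRD code). -/
theorem almost_msrd_22 (q t : ℕ)
    (hq : ∃ p k : ℕ, p.Prime ∧ 0 < k ∧ q = p ^ k)
    (Fq Fq2 : Type) [Field Fq] [Fintype Fq] [Field Fq2] [Fintype Fq2]
    [DecidableEq Fq2] [Algebra Fq Fq2]
    (hcq : Fintype.card Fq = q) (hcq2 : Fintype.card Fq2 = q ^ 2)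
    (ht : t ≤ q ^ 2) (ht4 : 4 ≤ t)
    (C₁ : Submodule Fq2 (Fin t → Fq2))
    (hk₁ : Module.finrank Fq2 C₁ = t - 3)
    (hd₁ : ∀ c ∈ C₁, c ≠ 0 → 4 ≤ hammingNorm c) :
    Module.finrank Fq (Submodule.restrictScalars Fq (C₁.prod (parityCode Fq2 t)))
        = 4 * t - 8 ∧
    (∀ p ∈ C₁.prod (parityCode Fq2 t), p ≠ 0 →
      4 ≤ ∑ i : Fin t, blockRank2 Fq q (p.1 i) (p.2 i)) ∧
    (∃ p ∈ C₁.prod (parityCode Fq2 t), p ≠ 0 ∧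
      ∑ i : Fin t, blockRank2 Fq q (p.1 i) (p.2 i) = 4) ∧
    2 * (2 * t - 4 + 1) - (4 * t - 8) = 2 :=
  almost_msrd_22_general q t Fq Fq2 hcq hcq2 ht4 C₁ hk₁ hd₁
end
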